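/- arXiv:2010.09876 — 5 statements merged into one kernel-verified Lean document; each statement's English description precedes it below -/
import Mathlib

section
/- Uniform perfection is a quasisymmetric invariant: if f: Z → Z' is an η-quasisymmetric homeomorphism between metric spaces and Z is uniformly perfect, then Z' is uniformly perfect. -/
open Metric Set

/-- `f` is an η-quasisymmetry. -/
def IsQS {X Y : Type*} [MetricSpace X] [MetricSpace Y] (η : ℝ → ℝ) (f : X → Y) : Prop :=
  ∀ t : ℝ, 0 ≤ t → ∀ x a b : X,
    dist x a ≤ t * dist x b → dist (f x) (f a) ≤ η t * dist (f x) (f b)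

/-- A metric space is uniformly perfect if there is `μ ∈ (0,1)` such that every closed
ball `B_r(x) ≠ Z` with `r > 0` contains a point outside `B_{μr}(x)`. -/
def UniformlyPerfect (Z : Type*) [MetricSpace Z] : Prop :=
  ∃ μ : ℝ, 0 < μ ∧ μ < 1 ∧ ∀ (x : Z) (r : ℝ), 0 < r → closedBall x r ≠ univ →
    (closedBall x r \ closedBall x (μ * r)).Nonempty

/-!
Fix `x'` and `r` with `B_r(x') ≠ Z'`, and a point `z'` outside that ball. Pulling back,
uniform perfection of `Z` gives points `y k → x` starting at `y 0 = z` whose distances to `x`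
decrease at most by the factor `μ²` from one step to the next. Quasisymmetry turns this into
`d(x', f(y k)) ≤ H d(x', f(y (k+1)))` for any `H ≥ η(μ⁻²)`, while continuity gives `f(y k) → x'`.
The first `f(y k)` entering `B_r(x')` therefore lies in the annulus `B_r(x') \ B_{r/H}(x')`.
-/

open Filter Topology

def UniformlyPerfectWith (μ : ℝ) (Z : Type*) [MetricSpace Z] : Prop :=
  ∀ (x : Z) (r : ℝ), 0 < r → closedBall x r ≠ univ →
    (closedBall x r \ closedBall x (μ * r)).Nonempty

theorem exists_mem_Ioc_of_tendsto_zero_of_le_mul_succ {a : ℕ → ℝ} {r H : ℝ} (hr : 0 < r)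
    (hH : 0 < H) (ha₀ : r < a 0) (ha : Tendsto a atTop (𝓝 0)) (hstep : ∀ k, a k ≤ H * a (k + 1)) :
    ∃ k, a k ∈ Ioc (H⁻¹ * r) r := by
  classical
  have hex : ∃ k, a k ≤ r := ((ha.eventually (ge_mem_nhds hr)).exists)
  obtain ⟨m, hm⟩ : ∃ m, Nat.find hex = m + 1 :=
    Nat.exists_eq_add_one.2 (Nat.pos_of_ne_zero fun h0 => by
      have := Nat.find_spec hex
      rw [h0] at this
      linarith)
  have hlt : r < a m := lt_of_not_ge (Nat.find_min hex (by omega))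
  refine ⟨m + 1, ?_, hm ▸ Nat.find_spec hex⟩
  rw [inv_mul_lt_iff₀ hH]
  exact hlt.trans_le (hstep m)

namespace UniformlyPerfectWith

variable {Z : Type*} [MetricSpace Z] {μ : ℝ}

theorem exists_mem_annulus (hZ : UniformlyPerfectWith μ Z) {x z : Z} {s : ℝ} (hs : 0 < s)
    (hsz : s < dist x z) : ∃ w, dist x w ∈ Ioc (μ * s) s := by
  have hball : closedBall x s ≠ univ := fun h => by
    have hz : z ∈ closedBall x s := h ▸ mem_univ z
    rw [mem_closedBall, dist_comm] at hz
    linarith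
  obtain ⟨w, hw, hw'⟩ := hZ x s hs hball
  rw [mem_closedBall, dist_comm] at hw
  rw [mem_closedBall, not_le, dist_comm] at hw'
  exact ⟨w, hw', hw⟩

theorem exists_seq_dist_mem_Ioc (hZ : UniformlyPerfectWith μ Z) (hμ₀ : 0 < μ) (hμ₁ : μ < 1)
    {x z : Z} (hxz : x ≠ z) :
    ∃ y : ℕ → Z, y 0 = z ∧ ∀ k, dist x (y k) ∈ Ioc (μ ^ (k + 1) * dist x z) (μ ^ k * dist x z) := by
  have hd : 0 < dist x z := dist_pos.2 hxz
  have hw : ∀ k : ℕ, ∃ w, dist x w ∈ Ioc (μ * (μ ^ (k + 1) * dist x z)) (μ ^ (k + 1) * dist x z) :=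
    fun k => hZ.exists_mem_annulus (by positivity)
      (mul_lt_of_lt_one_left hd (pow_lt_one₀ hμ₀.le hμ₁ k.succ_ne_zero))
  choose w hw using hw
  refine ⟨fun | 0 => z | k + 1 => w k, rfl, fun k => ?_⟩
  cases k with
  | zero => exact ⟨by simpa using mul_lt_of_lt_one_left hd hμ₁, by simp⟩
  | succ k => simpa [pow_succ, mul_comm, mul_left_comm, mul_assoc] using hw k

theorem exists_tendsto_seq (hZ : UniformlyPerfectWith μ Z) (hμ₀ : 0 < μ) (hμ₁ : μ < 1)
    {x z : Z} (hxz : x ≠ z) :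
    ∃ y : ℕ → Z, y 0 = z ∧ Tendsto y atTop (𝓝 x) ∧
      ∀ k, dist x (y k) ≤ (μ ^ 2)⁻¹ * dist x (y (k + 1)) := by
  obtain ⟨y, hy₀, hy⟩ := hZ.exists_seq_dist_mem_Ioc hμ₀ hμ₁ hxz
  refine ⟨y, hy₀, ?_, fun k => ?_⟩
  · have hpow : Tendsto (fun k => μ ^ k * dist x z) atTop (𝓝 0) := by
      simpa using (tendsto_pow_atTop_nhds_zero_of_lt_one hμ₀.le hμ₁).mul_const (dist x z)
    refine tendsto_iff_dist_tendsto_zero.2 (squeeze_zero (fun _ => dist_nonneg) (fun k => ?_) hpow)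
    rw [dist_comm]
    exact (hy k).2
  · calc dist x (y k) ≤ μ ^ k * dist x z := (hy k).2
      _ = (μ ^ 2)⁻¹ * (μ ^ (k + 1 + 1) * dist x z) := by field_simp; ring
      _ ≤ (μ ^ 2)⁻¹ * dist x (y (k + 1)) := by gcongr; exact (hy (k + 1)).1.le

theorem of_continuous_surjective {Z' : Type*} [MetricSpace Z'] (hZ : UniformlyPerfectWith μ Z)
    (hμ₀ : 0 < μ) (hμ₁ : μ < 1) {f : Z → Z'} (hcont : Continuous f)
    (hsurj : Function.Surjective f) {H : ℝ} (hH : 0 < H)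
    (hf : ∀ x a b, dist x a ≤ (μ ^ 2)⁻¹ * dist x b → dist (f x) (f a) ≤ H * dist (f x) (f b)) :
    UniformlyPerfectWith H⁻¹ Z' := by
  intro x' r hr hball
  obtain ⟨z', hz'⟩ := (ne_univ_iff_exists_notMem _).1 hball
  rw [mem_closedBall, not_le, dist_comm] at hz'
  obtain ⟨x, rfl⟩ := hsurj x'
  obtain ⟨z, rfl⟩ := hsurj z'
  have hxz : x ≠ z := by
    rintro rfl
    rw [dist_self] at hz'
    linarith
  obtain ⟨y, rfl, hlim, hstep⟩ := hZ.exists_tendsto_seq hμ₀ hμ₁ hxz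
  have hflim : Tendsto (fun k => dist (f x) (f (y k))) atTop (𝓝 0) := by
    simpa using (tendsto_const_nhds (x := f x)).dist ((hcont.tendsto x).comp hlim)
  obtain ⟨k, hk⟩ := exists_mem_Ioc_of_tendsto_zero_of_le_mul_succ hr hH hz' hflim
    fun k => hf x (y k) (y (k + 1)) (hstep k)
  refine ⟨f (y k), ?_, ?_⟩
  · rw [mem_closedBall, dist_comm]
    exact hk.2
  · rw [mem_closedBall, not_le, dist_comm]
    exact hk.1

end UniformlyPerfectWith

theorem stmt_7_general {Z Z' : Type*} [MetricSpace Z] [MetricSpace Z']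
    (η : ℝ → ℝ)
    (f : Z ≃ₜ Z') (hf : IsQS η f) (h : UniformlyPerfect Z) :
    UniformlyPerfect Z' := by
  obtain ⟨μ, hμ₀, hμ₁, hZ⟩ := h
  set H := max (η (μ ^ 2)⁻¹) 2
  have hH : 1 < H := one_lt_two.trans_le (le_max_right _ _)
  refine ⟨H⁻¹, by positivity, inv_lt_one_of_one_lt₀ hH,
    UniformlyPerfectWith.of_continuous_surjective hZ hμ₀ hμ₁ f.continuous f.surjective
      (by positivity) fun x a b hab => ?_⟩
  exact (hf _ (by positivity) x a b hab).trans
    (mul_le_mul_of_nonneg_right (le_max_left _ _) dist_nonneg)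

/-- Uniform perfection is invariant under η-quasisymmetric homeomorphisms,
where `η` is a homeomorphism of `[0,∞)`. -/
theorem stmt_7 {Z Z' : Type*} [MetricSpace Z] [MetricSpace Z']
    (η : ℝ → ℝ) (hmono : StrictMonoOn η (Ici 0)) (hpos : ∀ t, 0 ≤ t → 0 ≤ η t)
    (hsurj : ∀ s, 0 ≤ s → ∃ t, 0 ≤ t ∧ η t = s)
    (f : Z ≃ₜ Z') (hf : IsQS η f) (h : UniformlyPerfect Z) :
    UniformlyPerfect Z' :=
  stmt_7_general η f hf h
end

section
/- Every quasi-isometry f: [0,∞) → [0,∞) is within finite sup-distance of a bilipschitz homeomorphism of [0,∞); moreover this sup-distance can be bounded in terms of the quasi-isometry constants of f only. -/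
/-!
A quasi-isometry `f ≥ 0` of `[0, ∞)` can only go down by a bounded amount: if `x ≤ y` and
`f y < f x`, then `f`, which tends to infinity along `[y, ∞)` in steps of bounded size, passes
close to `f x` at some point of `[y, ∞)`; that point is close to `x`, hence so is `y`, and
`f x - f y` is bounded. So `f` is coarsely increasing, and on a grid `h ℕ` with `h` large its
increments lie in `[1, B]`. The piecewise-linear interpolation of `n ↦ f (n h) - f 0` is then
bilipschitz, vanishes at `0` and stays within `2 B + f 0` of `f`, and the coarse surjectivity
of `f` bounds `f 0`.
-/

open Set

noncomputable def interpolate (b : ℕ → ℝ) (t : ℝ) : ℝ :=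
  b ⌊t⌋₊ + (t - ⌊t⌋₊) * (b (⌊t⌋₊ + 1) - b ⌊t⌋₊)

theorem interpolate_eq (b : ℕ → ℝ) {n : ℕ} {t : ℝ} (ht : t ∈ Icc (n : ℝ) (n + 1)) :
    interpolate b t = b n + (t - n) * (b (n + 1) - b n) := by
  rcases ht.2.lt_or_eq with hlt | rfl
  · rw [interpolate, (Nat.floor_eq_iff ((Nat.cast_nonneg n).trans ht.1)).2 ⟨ht.1, hlt⟩]
  · have : ⌊(n : ℝ) + 1⌋₊ = n + 1 := by exact_mod_cast Nat.floor_natCast (n + 1)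
    rw [interpolate, this]
    push_cast
    ring

theorem interpolate_natCast (b : ℕ → ℝ) (n : ℕ) : interpolate b n = b n := by
  simp [interpolate]

theorem MonotoneOn.Ici_zero_of_Icc_natCast {φ : ℝ → ℝ}
    (h : ∀ n : ℕ, MonotoneOn φ (Icc n (n + 1))) : MonotoneOn φ (Ici 0) := by
  have hIcc : ∀ n : ℕ, MonotoneOn φ (Icc 0 n) := by
    intro n
    induction n with
    | zero => simp
    | succ n ih =>
      have hn : (0 : ℝ) ≤ n := Nat.cast_nonneg n
      rw [Nat.cast_succ, ← Icc_union_Icc_eq_Icc hn (by linarith)]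
      exact ih.union_right (h n) (isGreatest_Icc hn) (isLeast_Icc (by linarith))
  intro x hx y hy hxy
  exact hIcc ⌈y⌉₊ ⟨hx, hxy.trans (Nat.le_ceil y)⟩ ⟨hy, Nat.le_ceil y⟩ hxy

theorem interpolate_sub_interpolate_bounds {b : ℕ → ℝ} {a B : ℝ}
    (hb : ∀ n, b (n + 1) - b n ∈ Icc a B) {s t : ℝ} (hs : 0 ≤ s) (hst : s ≤ t) :
    a * (t - s) ≤ interpolate b t - interpolate b s ∧
      interpolate b t - interpolate b s ≤ B * (t - s) := by
  have lower : MonotoneOn (fun t => interpolate b t - a * t) (Ici 0) :=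
    MonotoneOn.Ici_zero_of_Icc_natCast fun n x hx y hy hxy => by
      simp only [interpolate_eq b hx, interpolate_eq b hy]
      nlinarith [mul_nonneg (sub_nonneg.2 hxy) (sub_nonneg.2 (hb n).1)]
  have upper : MonotoneOn (fun t => B * t - interpolate b t) (Ici 0) :=
    MonotoneOn.Ici_zero_of_Icc_natCast fun n x hx y hy hxy => by
      simp only [interpolate_eq b hx, interpolate_eq b hy]
      nlinarith [mul_nonneg (sub_nonneg.2 hxy) (sub_nonneg.2 (hb n).2)]
  have ht : 0 ≤ t := hs.trans hst
  exact ⟨by linarith [lower hs ht hst], by linarith [upper hs ht hst]⟩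

def IsBilipschitzHomeomorphIci (g : ℝ → ℝ) : Prop :=
  ∃ L : ℝ, 1 ≤ L ∧
    (∀ x y, 0 ≤ x → 0 ≤ y → L⁻¹ * |x - y| ≤ |g x - g y| ∧ |g x - g y| ≤ L * |x - y|) ∧
    (∀ x, 0 ≤ x → 0 ≤ g x) ∧ (∀ z, 0 ≤ z → ∃ x, 0 ≤ x ∧ g x = z)

theorem isBilipschitzHomeomorphIci_of_sub_bounds {g : ℝ → ℝ} {L : ℝ} (hL : 1 ≤ L)
    (hg0 : g 0 = 0)
    (hg : ∀ x y, 0 ≤ x → x ≤ y → L⁻¹ * (y - x) ≤ g y - g x ∧ g y - g x ≤ L * (y - x)) :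
    IsBilipschitzHomeomorphIci g := by
  have hL₀ : 0 < L := by linarith
  have habs : ∀ x y, 0 ≤ x → 0 ≤ y →
      L⁻¹ * |x - y| ≤ |g x - g y| ∧ |g x - g y| ≤ L * |x - y| := by
    intro x y hx hy
    wlog hxy : x ≤ y generalizing x y
    · rw [abs_sub_comm x, abs_sub_comm (g x)]
      exact this y x hy hx (le_of_not_ge hxy)
    obtain ⟨h₁, h₂⟩ := hg x y hx hxy
    have hmono : 0 ≤ g y - g x := (mul_nonneg (inv_nonneg.2 hL₀.le) (sub_nonneg.2 hxy)).trans h₁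
    rw [abs_sub_comm, abs_of_nonneg (sub_nonneg.2 hxy), abs_sub_comm, abs_of_nonneg hmono]
    exact ⟨h₁, h₂⟩
  have hgrowth : ∀ x, 0 ≤ x → L⁻¹ * x ≤ g x := fun x hx => by
    simpa [hg0] using (hg 0 x le_rfl hx).1
  have hcont : ContinuousOn g (Ici 0) :=
    (LipschitzOnWith.of_dist_le' fun x hx y hy => by
      simpa only [Real.dist_eq] using (habs x y hx hy).2).continuousOn
  refine ⟨L, hL, habs, fun x hx => (by positivity : 0 ≤ L⁻¹ * x).trans (hgrowth x hx),
    fun z hz => ?_⟩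
  have hLz : z ≤ g (L * z) := by
    simpa [inv_mul_cancel_left₀ hL₀.ne'] using hgrowth (L * z) (by positivity)
  obtain ⟨x, hx, hgx⟩ := intermediate_value_Icc (by positivity : (0 : ℝ) ≤ L * z)
    (hcont.mono Icc_subset_Ici_self) ⟨by rwa [hg0], hLz⟩
  exact ⟨x, hx.1, hgx⟩

theorem exists_mem_Ioc_of_step_le {u : ℕ → ℝ} {D t : ℝ} (hstep : ∀ k, u (k + 1) ≤ u k + D)
    (h₀ : u 0 ≤ t) (hex : ∃ k, t < u k) : ∃ k, u k ∈ Ioc (t - D) t := by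
  classical
  obtain ⟨k, hk⟩ : ∃ k, Nat.find hex = k + 1 :=
    Nat.exists_eq_succ_of_ne_zero fun h => (Nat.find_spec hex).not_ge (h ▸ h₀)
  have hle : u k ≤ t := not_lt.1 (Nat.find_min hex (by omega))
  have hlt : t < u (k + 1) := hk ▸ Nat.find_spec hex
  exact ⟨k, by linarith [hstep k], hle⟩

def IsQuasiIsometricEmbeddingOnIci (lam eps : ℝ) (f : ℝ → ℝ) : Prop :=
  ∀ x y, 0 ≤ x → 0 ≤ y →
    lam⁻¹ * |x - y| - eps ≤ |f x - f y| ∧ |f x - f y| ≤ lam * |x - y| + eps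

def IsIncreasingQuasiIsometryOnIci (lam E : ℝ) (f : ℝ → ℝ) : Prop :=
  ∀ x y, 0 ≤ x → x ≤ y → lam⁻¹ * (y - x) - E ≤ f y - f x ∧ f y - f x ≤ lam * (y - x) + E

namespace IsQuasiIsometricEmbeddingOnIci

variable {lam eps : ℝ} {f : ℝ → ℝ}

theorem eps_nonneg (hf : IsQuasiIsometricEmbeddingOnIci lam eps f) : 0 ≤ eps := by
  simpa using (hf 0 0 le_rfl le_rfl).1

theorem abs_sub_le_of_abs_sub_le (hf : IsQuasiIsometricEmbeddingOnIci lam eps f)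
    (hlam : 0 < lam) {x y D : ℝ} (hx : 0 ≤ x) (hy : 0 ≤ y) (h : |f x - f y| ≤ D) :
    |x - y| ≤ lam * (D + eps) :=
  calc |x - y| = lam * (lam⁻¹ * |x - y|) := (mul_inv_cancel_left₀ hlam.ne' _).symm
    _ ≤ lam * (D + eps) := by gcongr; linarith [(hf x y hx hy).1]

theorem lt_apply_of_lt_abs_sub (hf : IsQuasiIsometricEmbeddingOnIci lam eps f) (hlam : 0 < lam)
    (hpos : ∀ x, 0 ≤ x → 0 ≤ f x) {x w : ℝ} (hx : 0 ≤ x) (hw : 0 ≤ w)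
    (h : lam * (f x + eps) < |x - w|) : f x < f w := by
  refine lt_of_not_ge fun hle => h.not_ge (hf.abs_sub_le_of_abs_sub_le hlam hx hw ?_)
  rw [abs_of_nonneg (sub_nonneg.2 hle)]
  linarith [hpos w hw]

theorem sub_le_of_le (hf : IsQuasiIsometricEmbeddingOnIci lam eps f) (hlam : 0 < lam)
    (hpos : ∀ x, 0 ≤ x → 0 ≤ f x) {x y : ℝ} (hx : 0 ≤ x) (hxy : x ≤ y) :
    f x - f y ≤ lam ^ 2 * (2 * eps + 1) + eps := by
  have hy : 0 ≤ y := hx.trans hxy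
  have heps := hf.eps_nonneg
  rcases le_or_gt (f x) (f y) with hle | hlt
  · nlinarith [sq_nonneg lam]
  have hpt : ∀ k : ℕ, 0 ≤ y + k / lam := fun k => by positivity
  have hstep : ∀ k : ℕ, f (y + (k + 1 : ℕ) / lam) ≤ f (y + k / lam) + (1 + eps) := by
    intro k
    have hdist : y + (k + 1 : ℕ) / lam - (y + k / lam) = lam⁻¹ := by
      push_cast
      field_simp
      ring
    have := (hf _ _ (hpt (k + 1)) (hpt k)).2
    rw [hdist, abs_of_pos (inv_pos.2 hlam), mul_inv_cancel₀ hlam.ne'] at this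
    linarith [le_abs_self (f (y + (k + 1 : ℕ) / lam) - f (y + k / lam))]
  have hfar : ∀ k : ℕ, |x - (y + k / lam)| = y - x + k / lam := fun k => by
    have : 0 ≤ (k : ℝ) / lam := by positivity
    rw [abs_sub_comm, abs_of_nonneg (by linarith)]
    ring
  have hescape : ∃ k : ℕ, f x < f (y + k / lam) := by
    obtain ⟨k, hk⟩ := exists_nat_gt (lam ^ 2 * (f x + eps))
    have hk' : lam * (f x + eps) < k / lam := by
      rw [lt_div_iff₀ hlam]
      linarith
    exact ⟨k, hf.lt_apply_of_lt_abs_sub hlam hpos hx (hpt k) (by linarith [hfar k])⟩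
  obtain ⟨k, hk₁, hk₂⟩ := exists_mem_Ioc_of_step_le hstep (by simpa using hlt.le) hescape
  have hclose := hf.abs_sub_le_of_abs_sub_le hlam hx (hpt k) (D := 1 + eps)
    (abs_le.2 ⟨by linarith, by linarith⟩)
  have hyx : |x - y| ≤ lam * (1 + 2 * eps) := by
    rw [abs_sub_comm, abs_of_nonneg (sub_nonneg.2 hxy)]
    have : 0 ≤ (k : ℝ) / lam := by positivity
    linarith [hfar k]
  calc f x - f y ≤ lam * |x - y| + eps := (le_abs_self _).trans (hf x y hx hy).2
    _ ≤ lam * (lam * (1 + 2 * eps)) + eps := by gcongr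
    _ = lam ^ 2 * (2 * eps + 1) + eps := by ring

theorem isIncreasingQuasiIsometryOnIci (hf : IsQuasiIsometricEmbeddingOnIci lam eps f)
    {C : ℝ} (hC : ∀ x y, 0 ≤ x → x ≤ y → f x - f y ≤ C) :
    IsIncreasingQuasiIsometryOnIci lam (eps + 2 * C) f := by
  have hC₀ : 0 ≤ C := by simpa using hC 0 0 le_rfl le_rfl
  intro x y hx hxy
  have hy : 0 ≤ y := hx.trans hxy
  have hyx : |y - x| = y - x := abs_of_nonneg (sub_nonneg.2 hxy)
  obtain ⟨h₁, h₂⟩ := hf y x hy hx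
  rw [hyx] at h₁ h₂
  rcases abs_cases (f y - f x) with ⟨habs, -⟩ | ⟨habs, hneg⟩ <;> rw [habs] at h₁ h₂
  · constructor <;> linarith
  · constructor <;> linarith [hC x y hx hxy]

end IsQuasiIsometricEmbeddingOnIci

noncomputable def gridInterpolation (f : ℝ → ℝ) (h x : ℝ) : ℝ :=
  interpolate (fun n => f (n * h) - f 0) (x / h)

theorem gridInterpolation_natCast_mul {f : ℝ → ℝ} {h : ℝ} (hh : h ≠ 0) (n : ℕ) :
    gridInterpolation f h (n * h) = f (n * h) - f 0 := by
  simp [gridInterpolation, hh, interpolate_natCast]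

namespace IsIncreasingQuasiIsometryOnIci

variable {lam E h : ℝ} {f : ℝ → ℝ}

theorem const_nonneg (hf : IsIncreasingQuasiIsometryOnIci lam E f) : 0 ≤ E := by
  simpa using (hf 0 0 le_rfl le_rfl).1

theorem grid_increment_mem (hf : IsIncreasingQuasiIsometryOnIci lam E f) (hlam : 0 < lam)
    (hh : lam * (1 + E) ≤ h) (n : ℕ) :
    f ((n + 1 : ℕ) * h) - f (n * h) ∈ Icc 1 (lam * h + E) := by
  have hh₀ : 0 ≤ h := le_trans (by have := hf.const_nonneg; positivity) hh
  obtain ⟨h₁, h₂⟩ := hf (n * h) ((n + 1 : ℕ) * h) (by positivity) (by gcongr; omega)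
  have hstep : ((n + 1 : ℕ) : ℝ) * h - n * h = h := by push_cast; ring
  rw [hstep] at h₁ h₂
  have : 1 + E ≤ lam⁻¹ * h := (le_inv_mul_iff₀ hlam).2 hh
  exact ⟨by linarith, h₂⟩

theorem gridInterpolation_sub_bounds (hf : IsIncreasingQuasiIsometryOnIci lam E f)
    (hlam : 0 < lam) (hh : lam * (1 + E) ≤ h) {x y : ℝ} (hx : 0 ≤ x) (hxy : x ≤ y) :
    (y - x) / h ≤ gridInterpolation f h y - gridInterpolation f h x ∧
      gridInterpolation f h y - gridInterpolation f h x ≤ (lam * h + E) * ((y - x) / h) := by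
  have hh₀ : 0 < h := lt_of_lt_of_le (by have := hf.const_nonneg; positivity) hh
  obtain ⟨h₁, h₂⟩ := interpolate_sub_interpolate_bounds (b := fun n : ℕ => f (n * h) - f 0)
    (fun n => by simpa using hf.grid_increment_mem hlam hh n) (by positivity)
    (div_le_div_of_nonneg_right hxy hh₀.le)
  rw [one_mul] at h₁
  simp only [gridInterpolation, sub_div]
  exact ⟨h₁, h₂⟩

theorem isBilipschitzHomeomorphIci_gridInterpolation
    (hf : IsIncreasingQuasiIsometryOnIci lam E f) (hlam : 1 ≤ lam) (hh : lam * (1 + E) ≤ h) :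
    IsBilipschitzHomeomorphIci (gridInterpolation f h) := by
  have hE := hf.const_nonneg
  have hh₁ : 1 ≤ h := le_trans (by nlinarith) hh
  have hhB : h ≤ lam * h + E := by nlinarith
  refine isBilipschitzHomeomorphIci_of_sub_bounds (L := lam * h + E) (by linarith)
    (by simpa using gridInterpolation_natCast_mul (f := f) (by positivity) 0) fun x y hx hxy => ?_
  obtain ⟨h₁, h₂⟩ := hf.gridInterpolation_sub_bounds (by linarith) hh hx hxy
  have hyx : 0 ≤ y - x := sub_nonneg.2 hxy
  constructor
  · calc (lam * h + E)⁻¹ * (y - x) ≤ h⁻¹ * (y - x) := by gcongr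
      _ = (y - x) / h := inv_mul_eq_div h (y - x)
      _ ≤ _ := h₁
  · exact h₂.trans (by gcongr; exact div_le_self hyx hh₁)

theorem abs_sub_gridInterpolation_le (hf : IsIncreasingQuasiIsometryOnIci lam E f)
    (hlam : 0 < lam) (hh : lam * (1 + E) ≤ h) {x : ℝ} (hx : 0 ≤ x) :
    |f x - gridInterpolation f h x| ≤ 2 * (lam * h + E) + |f 0| := by
  have hh₀ : 0 < h := lt_of_lt_of_le (by have := hf.const_nonneg; positivity) hh
  -- at the grid point `p` just below `x` the two functions differ by exactly `f 0`
  set p := ⌊x / h⌋₊ * h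
  have hp₀ : 0 ≤ p := by positivity
  have hpx : p ≤ x := (le_div_iff₀ hh₀).1 (Nat.floor_le (by positivity))
  have hxp : x - p ≤ h := by
    have := Nat.lt_floor_add_one (x / h)
    rw [div_lt_iff₀ hh₀] at this
    linarith
  obtain ⟨hf₁, hf₂⟩ := hf p x hp₀ hpx
  obtain ⟨hg₁, hg₂⟩ := hf.gridInterpolation_sub_bounds hlam hh hp₀ hpx
  rw [gridInterpolation_natCast_mul hh₀.ne'] at hg₁ hg₂
  have hfrac : (x - p) / h ≤ 1 := (div_le_one hh₀).2 hxp
  have hgx : (lam * h + E) * ((x - p) / h) ≤ lam * h + E :=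
    mul_le_of_le_one_right (by have := hf.const_nonneg; positivity) hfrac
  have hfx : lam * (x - p) ≤ lam * h := by gcongr
  have hfx' : 0 ≤ lam⁻¹ * (x - p) := by
    have := sub_nonneg.2 hpx
    positivity
  rw [abs_le]
  constructor <;> linarith [div_nonneg (sub_nonneg.2 hpx) hh₀.le, le_abs_self (f 0),
    neg_abs_le (f 0), mul_pos hlam hh₀]

end IsIncreasingQuasiIsometryOnIci

/-- Every (λ,ε)-quasi-isometry of `[0,∞)` is within sup-distance `M` of a bilipschitz
homeomorphism of `[0,∞)`, where `M` depends only on `λ` and `ε`. -/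
theorem stmt_10 :
    ∀ lam eps : ℝ, 1 ≤ lam → 0 ≤ eps → ∃ M : ℝ,
      ∀ f : ℝ → ℝ,
        (∀ x, 0 ≤ x → 0 ≤ f x) →
        (∀ x y, 0 ≤ x → 0 ≤ y →
          lam⁻¹ * |x - y| - eps ≤ |f x - f y| ∧ |f x - f y| ≤ lam * |x - y| + eps) →
        (∀ z, 0 ≤ z → ∃ x, 0 ≤ x ∧ |f x - z| ≤ eps) →
        ∃ g : ℝ → ℝ,
          (∃ L : ℝ, 1 ≤ L ∧
            (∀ x y, 0 ≤ x → 0 ≤ y →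
              L⁻¹ * |x - y| ≤ |g x - g y| ∧ |g x - g y| ≤ L * |x - y|) ∧
            (∀ x, 0 ≤ x → 0 ≤ g x) ∧ (∀ z, 0 ≤ z → ∃ x, 0 ≤ x ∧ g x = z)) ∧
          ∀ x, 0 ≤ x → |f x - g x| ≤ M := by
  intro lam eps hlam _
  set C := lam ^ 2 * (2 * eps + 1) + eps
  set E := eps + 2 * C
  refine ⟨2 * (lam * (lam * (1 + E)) + E) + (eps + C), fun f hpos hqi hsurj => ?_⟩
  have hf : IsQuasiIsometricEmbeddingOnIci lam eps f := hqi
  have hdrift : ∀ x y, 0 ≤ x → x ≤ y → f x - f y ≤ C := fun x y hx hxy =>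
    hf.sub_le_of_le (by linarith) hpos hx hxy
  have hf₀ : |f 0| ≤ eps + C := by
    obtain ⟨x₀, hx₀, hfx₀⟩ := hsurj 0 le_rfl
    rw [sub_zero] at hfx₀
    rw [abs_of_nonneg (hpos 0 le_rfl)]
    linarith [hdrift 0 x₀ le_rfl hx₀, le_abs_self (f x₀)]
  have hinc := hf.isIncreasingQuasiIsometryOnIci hdrift
  refine ⟨gridInterpolation f (lam * (1 + E)), hinc.isBilipschitzHomeomorphIci_gridInterpolation
    hlam le_rfl, fun x hx => ?_⟩
  linarith [hinc.abs_sub_gridInterpolation_le (by linarith) le_rfl hx]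
end

section
/- Let X be a geodesic δ-hyperbolic space and g an isometry of X such that for some x ∈ X the orbit map n ↦ gⁿ(x) from ℤ to X is a quasigeodesic. Then g does not preserve any horofunction: for any function h: X → ℝ satisfying the horofunction condition with constant D₁, the function h ∘ g is not equal to h (in fact, h(gⁿ(x)) is unbounded below or above along the orbit). -/
open Metric Set

/-- The Gromov product `(y|z)_x`. -/
noncomputable def gromovProd {X : Type*} [MetricSpace X] (x y z : X) : ℝ :=
  (dist x y + dist x z - dist y z) / 2

/-- A unit-speed geodesic from `x` to `y`, defined on `[0, dist x y]`. -/
def IsGeodesicSeg {X : Type*} [MetricSpace X] (f : ℝ → X) (x y : X) : Prop :=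
  f 0 = x ∧ f (dist x y) = y ∧
    ∀ s ∈ Set.Icc (0:ℝ) (dist x y), ∀ t ∈ Set.Icc (0:ℝ) (dist x y),
      dist (f s) (f t) = |s - t|

/-- A geodesic metric space: any two points are joined by a geodesic. -/
def GeodesicSpace (X : Type*) [MetricSpace X] : Prop :=
  ∀ x y : X, ∃ f : ℝ → X, IsGeodesicSeg f x y

/-- A unit-speed geodesic ray, defined on `[0, ∞)`. -/
def IsGeodesicRay {X : Type*} [MetricSpace X] (c : ℝ → X) : Prop :=
  ∀ s ∈ Set.Ici (0:ℝ), ∀ t ∈ Set.Ici (0:ℝ), dist (c s) (c t) = |s - t|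

/-- Two geodesic rays are asymptotic if one stays at bounded distance from the other. -/
def AsympRays {X : Type*} [MetricSpace X] (c c' : ℝ → X) : Prop :=
  ∃ K : ℝ, ∀ t, 0 ≤ t → ∃ s, 0 ≤ s ∧ dist (c t) (c' s) ≤ K

/-- δ-hyperbolicity in the "equiradial" sense: on a geodesic triangle with vertices
`x,y,z`, points on the sides `[x,y]` and `[x,z]` that are equidistant from `x`, at distance
at most the Gromov product `(y|z)_x`, are at distance at most δ. -/
def GromovThin (X : Type*) [MetricSpace X] (δ : ℝ) : Prop :=
  ∀ (x y z : X) (f g : ℝ → X), IsGeodesicSeg f x y → IsGeodesicSeg g x z →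
    ∀ s : ℝ, 0 ≤ s → s ≤ gromovProd x y z → dist (f s) (g s) ≤ δ

/-- δ-thin triangles: each side of a geodesic triangle lies in the closed δ-neighborhood
of the union of the other two sides. -/
def ThinTriangles (X : Type*) [MetricSpace X] (δ : ℝ) : Prop :=
  ∀ (x y z : X) (fxy fyz fxz : ℝ → X),
    IsGeodesicSeg fxy x y → IsGeodesicSeg fyz y z → IsGeodesicSeg fxz x z →
    ∀ p ∈ fxy '' Set.Icc (0:ℝ) (dist x y),
      ∃ q ∈ (fyz '' Set.Icc (0:ℝ) (dist y z)) ∪ (fxz '' Set.Icc (0:ℝ) (dist x z)),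
        dist p q ≤ δ

/-- `h` satisfies the (ray-based) horofunction condition about the boundary point
represented by the ray `c₀`, with constant `D₁`: if `w` lies within `5δ` of a geodesic ray
from `x` tending to that boundary point, then `h w − h x` is within `D₁` of `−d(x,w)`. -/
def HoroRayCond {X : Type*} [MetricSpace X] (δ D₁ : ℝ) (c₀ : ℝ → X) (h : X → ℝ) : Prop :=
  ∀ x w : X,
    (∃ c : ℝ → X, IsGeodesicRay c ∧ c 0 = x ∧ AsympRays c c₀ ∧
      ∃ t, 0 ≤ t ∧ dist w (c t) ≤ 5 * δ) →
    |h w - h x + dist x w| ≤ D₁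

/-!
A horofunction `h` about the endpoint of the ray `c₀` agrees, up to an additive constant, with the
Busemann function `b` of `c₀`: properness yields a ray from any point `p` asymptotic to `c₀`, and
comparing `h` along this ray with `h` along `c₀` pins down `h p - h (c₀ 0)`. If `h` were bounded
above on the orbit of `x`, the orbit would stay in a horoball `{b ≤ M}`. The four-point condition
relative to the point at infinity, applied to `x`, `gⁿ x`, `g⁻ⁿ x`, then gives
`d(x, g²ⁿ x) ≤ d(x, gⁿ x) + C`, so `d(x, g^(2^k) x)` grows only linearly in `k`, which contradicts
the quasigeodesic lower bound. A `g`-invariant `h` is constant on the orbit, hence bounded.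
-/

open Filter Topology

section Hyperbolic

variable {X : Type*} [MetricSpace X]

namespace IsGeodesicSeg

variable {f : ℝ → X} {x y : X}

lemma dist_left (hf : IsGeodesicSeg f x y) {s : ℝ} (hs : 0 ≤ s) (hsd : s ≤ dist x y) :
    dist x (f s) = s := by
  rw [← hf.1, hf.2.2 0 ⟨le_rfl, dist_nonneg⟩ s ⟨hs, hsd⟩, zero_sub, abs_neg, abs_of_nonneg hs]

lemma dist_right (hf : IsGeodesicSeg f x y) {s : ℝ} (hs : 0 ≤ s) (hsd : s ≤ dist x y) :
    dist (f s) y = dist x y - s := by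
  conv_lhs => rw [← hf.2.1]
  rw [hf.2.2 s ⟨hs, hsd⟩ _ ⟨dist_nonneg, le_rfl⟩, abs_of_nonpos (by linarith), neg_sub]

lemma reverse (hf : IsGeodesicSeg f x y) : IsGeodesicSeg (fun s ↦ f (dist x y - s)) y x := by
  refine ⟨by simpa using hf.2.1, by simpa [dist_comm y x] using hf.1, ?_⟩
  intro s hs t ht
  rw [dist_comm y x] at hs ht
  rw [hf.2.2 _ ⟨by linarith [hs.2], by linarith [hs.1]⟩ _ ⟨by linarith [ht.2], by linarith [ht.1]⟩,
    ← abs_neg]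
  ring_nf

end IsGeodesicSeg

-- Sampled at integer times; `dist p (c t) - t` is antitone in `t`, so this is the usual limit.
noncomputable def busemann (c : ℝ → X) (p : X) : ℝ := ⨅ m : ℕ, (dist p (c m) - m)

namespace IsGeodesicRay

variable {c : ℝ → X}

lemma dist_eq_sub (hc : IsGeodesicRay c) {s t : ℝ} (hs : 0 ≤ s) (hst : s ≤ t) :
    dist (c s) (c t) = t - s := by
  rw [hc s hs t (hs.trans hst), abs_of_nonpos (by linarith), neg_sub]

lemma isGeodesicSeg (hc : IsGeodesicRay c) {t : ℝ} (ht : 0 ≤ t) :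
    IsGeodesicSeg c (c 0) (c t) := by
  have hd : dist (c 0) (c t) = t := by rw [hc.dist_eq_sub le_rfl ht, sub_zero]
  exact ⟨rfl, by rw [hd], fun s hs u hu ↦ hc s hs.1 u hu.1⟩

lemma le_dist_add_dist (hc : IsGeodesicRay c) (p : X) {t : ℝ} (ht : 0 ≤ t) :
    t ≤ dist p (c t) + dist p (c 0) := by
  have := dist_triangle (c 0) p (c t)
  rw [hc.dist_eq_sub le_rfl ht, dist_comm] at this
  linarith

lemma antitone_dist_sub (hc : IsGeodesicRay c) (p : X) :
    Antitone fun m : ℕ ↦ dist p (c m) - m := by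
  refine antitone_nat_of_succ_le fun n ↦ ?_
  have := dist_triangle p (c n) (c (n + 1 : ℕ))
  rw [hc.dist_eq_sub (Nat.cast_nonneg n) (by simp)] at this
  push_cast at this ⊢
  linarith

lemma bddBelow_dist_sub (hc : IsGeodesicRay c) (p : X) :
    BddBelow (range fun m : ℕ ↦ dist p (c m) - m) :=
  ⟨-dist p (c 0), by
    rintro _ ⟨m, rfl⟩
    linarith [hc.le_dist_add_dist p (Nat.cast_nonneg m)]⟩

lemma busemann_le (hc : IsGeodesicRay c) (p : X) (m : ℕ) : busemann c p ≤ dist p (c m) - m :=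
  ciInf_le (hc.bddBelow_dist_sub p) m

lemma dist_sub_le_dist (hc : IsGeodesicRay c) (p : X) (m : ℕ) :
    dist p (c m) - m ≤ dist p (c 0) := by
  simpa using hc.antitone_dist_sub p (Nat.zero_le m)

lemma tendsto_busemann (hc : IsGeodesicRay c) (p : X) :
    Tendsto (fun m : ℕ ↦ dist p (c m) - m) atTop (𝓝 (busemann c p)) :=
  tendsto_atTop_ciInf (hc.antitone_dist_sub p) (hc.bddBelow_dist_sub p)

end IsGeodesicRay

section FourPoint

variable {δ : ℝ}

lemma GromovThin.min_gromovProd_le (hgeo : GeodesicSpace X) (hhyp : GromovThin X δ)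
    (y p q z : X) : min (gromovProd y p z) (gromovProd y q z) ≤ gromovProd y p q + δ := by
  set s := min (gromovProd y p z) (gromovProd y q z)
  have hs : 0 ≤ s := by
    unfold s gromovProd
    exact le_min (by linarith [dist_triangle p y z, dist_comm p y])
      (by linarith [dist_triangle q y z, dist_comm q y])
  have hsp : s ≤ dist y p :=
    (min_le_left _ _).trans (by unfold gromovProd; linarith [dist_triangle y p z])
  have hsq : s ≤ dist y q :=
    (min_le_right _ _).trans (by unfold gromovProd; linarith [dist_triangle y q z])
  obtain ⟨f, hf⟩ := hgeo y p
  obtain ⟨k, hk⟩ := hgeo y z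
  obtain ⟨l, hl⟩ := hgeo y q
  have hfk : dist (f s) (k s) ≤ δ := hhyp y p z f k hf hk s hs (min_le_left _ _)
  have hlk : dist (l s) (k s) ≤ δ := hhyp y q z l k hl hk s hs (min_le_right _ _)
  have hpq : dist p q ≤ (dist y p - s) + 2 * δ + (dist y q - s) := by
    calc dist p q ≤ dist p (f s) + dist (f s) (l s) + dist (l s) q := dist_triangle4 _ _ _ _
      _ ≤ (dist y p - s) + (dist (f s) (k s) + dist (l s) (k s)) + (dist y q - s) := by
        gcongr
        · rw [dist_comm, hf.dist_right hs hsp]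
        · exact dist_triangle_right _ _ _
        · rw [hl.dist_right hs hsq]
      _ ≤ _ := by linarith
  unfold gromovProd
  linarith

/-- The four-point condition with the point at infinity `c`, in terms of the Busemann function. -/
lemma GromovThin.min_sub_busemann_add_busemann_le (hgeo : GeodesicSpace X)
    (hhyp : GromovThin X δ) {c : ℝ → X} (hc : IsGeodesicRay c) (y p q : X) :
    min (dist y p - busemann c p) (dist y q - busemann c q) + busemann c y
      ≤ 2 * gromovProd y p q + 2 * δ := by
  refine le_of_tendsto' (((tendsto_const_nhds.sub (hc.tendsto_busemann p)).min
    (tendsto_const_nhds.sub (hc.tendsto_busemann q))).add (hc.tendsto_busemann y)) fun m ↦ ?_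
  have := hhyp.min_gromovProd_le hgeo y p q (c m)
  unfold gromovProd at this ⊢
  rw [min_div_div_right zero_le_two] at this
  rw [← min_add_add_right]
  ring_nf at this ⊢
  linarith

end FourPoint

lemma GromovThin.dist_geodesicSeg_ray_le {δ : ℝ} (hhyp : GromovThin X δ) {c F : ℝ → X}
    (hc : IsGeodesicRay c) {p : X} {t : ℝ} (ht : 0 ≤ t) (hF : IsGeodesicSeg F p (c t)) {u : ℝ}
    (hu : dist p (c 0) ≤ u) (hut : u ≤ dist p (c t)) :
    dist (F u) (c (u - (dist p (c t) - t))) ≤ δ := by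
  have hct : dist (c 0) (c t) = t := by rw [hc.dist_eq_sub le_rfl ht, sub_zero]
  have := hhyp (c t) p (c 0) _ _ hF.reverse (hc.isGeodesicSeg ht).reverse (dist p (c t) - u)
    (by linarith) (by
      unfold gromovProd
      linarith [dist_triangle p (c 0) (c t), dist_comm (c t) p, dist_comm (c t) (c 0)])
  rw [hct, sub_sub_cancel] at this
  convert this using 3
  ring

section LimitRay

variable [ProperSpace X]

lemma exists_isGeodesicRay_tendsto {p : X} {y : ℕ → X} {F : ℕ → ℝ → X}
    (hF : ∀ m, IsGeodesicSeg (F m) p (y m)) (hy : Tendsto (fun m ↦ dist p (y m)) atTop atTop) :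
    ∃ U : Ultrafilter ℕ, (U : Filter ℕ) ≤ atTop ∧ ∃ c : ℝ → X, IsGeodesicRay c ∧ c 0 = p ∧
      ∀ u, 0 ≤ u → Tendsto (fun m ↦ F m u) (U : Filter ℕ) (𝓝 (c u)) := by
  obtain ⟨U, hU⟩ := Ultrafilter.exists_le (atTop : Filter ℕ)
  have hlong (u : ℝ) : ∀ᶠ m in (U : Filter ℕ), u ≤ dist p (y m) := hU (hy.eventually_ge_atTop u)
  have hlim (u : ℝ) : ∃ z, 0 ≤ u → Tendsto (fun m ↦ F m u) (U : Filter ℕ) (𝓝 z) := by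
    by_cases hu : 0 ≤ u
    · have hball : ↑(U.map fun m ↦ F m u) ≤ 𝓟 (closedBall p u) := by
        rw [le_principal_iff]
        refine (hlong u).mono fun m hm ↦ ?_
        rw [mem_closedBall, dist_comm, (hF m).dist_left hu hm]
      obtain ⟨z, -, hz⟩ := (isCompact_closedBall p u).ultrafilter_le_nhds _ hball
      exact ⟨z, fun _ ↦ hz⟩
    · exact ⟨p, fun h ↦ absurd h hu⟩
  choose c hc using hlim
  refine ⟨U, hU, c, fun s hs t ht ↦ ?_, ?_, hc⟩
  · have hst : ∀ᶠ m in (U : Filter ℕ), dist (F m s) (F m t) = |s - t| :=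
      ((hlong s).and (hlong t)).mono fun m hm ↦ (hF m).2.2 s ⟨hs, hm.1⟩ t ⟨ht, hm.2⟩
    exact tendsto_nhds_unique (((hc s hs).dist (hc t ht)).congr' hst) tendsto_const_nhds
  · refine tendsto_nhds_unique (hc 0 le_rfl) ?_
    simp only [fun m ↦ (hF m).1, tendsto_const_nhds]

variable {δ : ℝ}

lemma GromovThin.exists_isGeodesicRay_dist_le (hgeo : GeodesicSpace X) (hhyp : GromovThin X δ)
    {c₀ : ℝ → X} (hc₀ : IsGeodesicRay c₀) (p : X) :
    ∃ c : ℝ → X, IsGeodesicRay c ∧ c 0 = p ∧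
      ∀ u, dist p (c₀ 0) ≤ u → dist (c u) (c₀ (u - busemann c₀ p)) ≤ δ := by
  choose F hF using fun m : ℕ ↦ hgeo p (c₀ m)
  have hfar : Tendsto (fun m : ℕ ↦ dist p (c₀ m)) atTop atTop :=
    tendsto_atTop_mono (f := fun m : ℕ ↦ (m : ℝ) + -dist p (c₀ 0))
      (fun m ↦ by linarith [hc₀.le_dist_add_dist p (Nat.cast_nonneg m)])
      (tendsto_atTop_add_const_right _ _ tendsto_natCast_atTop_atTop)
  obtain ⟨U, hU, c, hc, hc0, hlim⟩ := exists_isGeodesicRay_tendsto hF hfar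
  refine ⟨c, hc, hc0, fun u hu ↦ ?_⟩
  set a := busemann c₀ p
  have hbound : ∀ᶠ m in (U : Filter ℕ),
      dist (c u) (c₀ (u - a)) ≤ dist (c u) (F m u) + δ + ((dist p (c₀ m) - m) - a) := by
    refine hU ((hfar.eventually_ge_atTop u).mono fun m hum ↦ ?_)
    have hthin := hhyp.dist_geodesicSeg_ray_le hc₀ (Nat.cast_nonneg m) (hF m) hu hum
    have ha := hc₀.busemann_le p m
    have hd := hc₀.dist_sub_le_dist p m
    have hshift : dist (c₀ (u - (dist p (c₀ m) - m))) (c₀ (u - a)) = (dist p (c₀ m) - m) - a := by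
      rw [hc₀.dist_eq_sub (by linarith) (by linarith)]
      ring
    linarith [dist_triangle4 (c u) (F m u) (c₀ (u - (dist p (c₀ m) - m))) (c₀ (u - a))]
  have hto : Tendsto (fun m ↦ dist (c u) (F m u) + δ + ((dist p (c₀ m) - m) - a)) U
      (𝓝 (dist (c u) (c u) + δ + (a - a))) :=
    ((tendsto_const_nhds.dist (hlim u (dist_nonneg.trans hu))).add_const δ).add
      (((hc₀.tendsto_busemann p).mono_left hU).sub_const a)
  simpa using ge_of_tendsto hto hbound

end LimitRay

lemma HoroRayCond.abs_sub_busemann_le [ProperSpace X] {δ D₁ : ℝ} (hδ : 0 ≤ δ)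
    (hgeo : GeodesicSpace X) (hhyp : GromovThin X δ) {c₀ : ℝ → X} (hc₀ : IsGeodesicRay c₀)
    {h : X → ℝ} (hh : HoroRayCond δ D₁ c₀ h) (p : X) :
    |h p - h (c₀ 0) - busemann c₀ p| ≤ 2 * D₁ + δ := by
  obtain ⟨c, hc, hc0, hclose⟩ := hhyp.exists_isGeodesicRay_dist_le hgeo hc₀ p
  set d₀ := dist p (c₀ 0)
  set a := busemann c₀ p
  have hd₀ : 0 ≤ d₀ := dist_nonneg
  have ha : a ≤ d₀ := by simpa using hc₀.busemann_le p 0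
  have hw := hclose d₀ le_rfl
  have hasymp : AsympRays c c₀ := by
    refine ⟨2 * d₀ + δ, fun t ht ↦ ?_⟩
    by_cases htd : d₀ ≤ t
    · exact ⟨t - a, by linarith, by linarith [hclose t htd]⟩
    · refine ⟨0, le_rfl, ?_⟩
      have := dist_triangle (c t) (c 0) (c₀ 0)
      rw [dist_comm (c t) (c 0), hc.dist_eq_sub le_rfl ht, hc0] at this
      linarith
  have hfrom_p : |h (c d₀) - h p + d₀| ≤ D₁ := by
    have hpd : dist p (c d₀) = d₀ := by rw [← hc0, hc.dist_eq_sub le_rfl hd₀, sub_zero]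
    have := hh p (c d₀) ⟨c, hc, hc0, hasymp, d₀, hd₀, by rw [dist_self]; positivity⟩
    rwa [hpd] at this
  have hfrom_c₀ : |h (c d₀) - h (c₀ 0) + dist (c₀ 0) (c d₀)| ≤ D₁ :=
    hh (c₀ 0) (c d₀) ⟨c₀, hc₀, rfl, ⟨0, fun t ht ↦ ⟨t, ht, by simp⟩⟩, d₀ - a, by linarith,
      by linarith⟩
  have hray : dist (c₀ 0) (c₀ (d₀ - a)) = d₀ - a := by
    rw [hc₀.dist_eq_sub le_rfl (by linarith), sub_zero]
  have hdist : |dist (c₀ 0) (c d₀) - (d₀ - a)| ≤ δ := by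
    rw [abs_le]
    constructor
    · linarith [dist_triangle (c₀ 0) (c d₀) (c₀ (d₀ - a)), dist_comm (c d₀) (c₀ (d₀ - a))]
    · linarith [dist_triangle (c₀ 0) (c₀ (d₀ - a)) (c d₀), dist_comm (c d₀) (c₀ (d₀ - a))]
  rw [abs_le] at hfrom_p hfrom_c₀ hdist ⊢
  constructor <;> linarith

namespace IsometryEquiv

lemma dist_zpow_apply_zpow_apply (g : X ≃ᵢ X) (x : X) (m n : ℤ) :
    dist ((g ^ m) x) ((g ^ n) x) = dist ((g ^ (m - n)) x) x := by
  calc dist ((g ^ m) x) ((g ^ n) x) = dist ((g ^ n) ((g ^ (m - n)) x)) ((g ^ n) x) := by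
        rw [← mul_apply, ← zpow_add, add_sub_cancel]
    _ = dist ((g ^ (m - n)) x) x := (g ^ n).dist_eq _ _

lemma apply_zpow_apply_of_comp_eq {α : Type*} {h : X → α} {g : X ≃ᵢ X} (hg : h ∘ g = h)
    (n : ℤ) (x : X) : h ((g ^ n) x) = h x := by
  induction n using Int.induction_on generalizing x with
  | zero => rfl
  | succ n ih => rw [zpow_add_one, mul_apply, ih, ← Function.comp_apply (f := h), hg]
  | pred n ih =>
    rw [zpow_sub_one, mul_apply, ih, ← congrFun hg (g⁻¹ x), Function.comp_apply, apply_inv_self]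

end IsometryEquiv

lemma GromovThin.dist_zpow_two_mul_le {δ M : ℝ} (hgeo : GeodesicSpace X) (hhyp : GromovThin X δ)
    {c₀ : ℝ → X} (hc₀ : IsGeodesicRay c₀) (g : X ≃ᵢ X) (x : X)
    (hM : ∀ n : ℤ, busemann c₀ ((g ^ n) x) ≤ M) (n : ℤ) :
    dist ((g ^ (2 * n)) x) x ≤ dist ((g ^ n) x) x + (M - busemann c₀ x + 2 * δ) := by
  have h4 := hhyp.min_sub_busemann_add_busemann_le hgeo hc₀ x ((g ^ n) x) ((g ^ (-n)) x)
  have hneg : dist x ((g ^ (-n)) x) = dist ((g ^ n) x) x := by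
    simpa using g.dist_zpow_apply_zpow_apply x 0 (-n)
  have htwo : dist ((g ^ n) x) ((g ^ (-n)) x) = dist ((g ^ (2 * n)) x) x := by
    rw [g.dist_zpow_apply_zpow_apply, sub_neg_eq_add, two_mul]
  rw [gromovProd, dist_comm x, hneg, htwo] at h4
  have hmin : dist ((g ^ n) x) x - M ≤ min (dist ((g ^ n) x) x - busemann c₀ ((g ^ n) x))
      (dist ((g ^ n) x) x - busemann c₀ ((g ^ (-n)) x)) :=
    le_min (by linarith [hM n]) (by linarith [hM (-n)])
  linarith

lemma not_forall_le_of_two_mul_le {f : ℕ → ℝ} {a b C : ℝ} (ha : 0 < a)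
    (hdouble : ∀ n, f (2 * n) ≤ f n + C) : ¬ ∀ n, a * n - b ≤ f n := by
  intro hgrowth
  have hiter (k : ℕ) : f (2 ^ k) ≤ f 1 + k * C := by
    induction k with
    | zero => simp
    | succ k ih => rw [pow_succ', Nat.cast_succ]; linarith [hdouble (2 ^ k)]
  have hsmall : (fun k : ℕ ↦ f 1 + b + k * C) =o[atTop] fun k ↦ (2 : ℝ) ^ k := by
    have hpow : Tendsto (norm ∘ fun k : ℕ ↦ (2 : ℝ) ^ k) atTop atTop := by
      simpa [Function.comp_def] using tendsto_pow_atTop_atTop_of_one_lt one_lt_two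
    simpa [mul_comm] using (Asymptotics.isLittleO_const_left.2 (Or.inr hpow)).add
      ((isLittleO_coe_const_pow_of_one_lt (R := ℝ) one_lt_two).const_mul_left C)
  obtain ⟨k, hk⟩ := (hsmall.def (half_pos ha)).exists
  have hk' := (le_abs_self _).trans hk
  have := hgrowth (2 ^ k)
  push_cast at this
  rw [Real.norm_eq_abs, abs_of_pos (by positivity)] at hk'
  linarith [hiter k, mul_pos ha (by positivity : (0 : ℝ) < 2 ^ k)]

end Hyperbolic

theorem stmt_12_general {X : Type*} [MetricSpace X] [ProperSpace X]
    (δ D₁ : ℝ) (hδ : 0 ≤ δ) (hgeo : GeodesicSpace X) (hhyp : GromovThin X δ)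
    (g : X ≃ᵢ X) (x : X)
    (horbit : ∃ lam eps : ℝ, 1 ≤ lam ∧ 0 ≤ eps ∧ ∀ m n : ℤ,
      lam⁻¹ * |(m : ℝ) - n| - eps ≤ dist ((g ^ m) x) ((g ^ n) x) ∧
      dist ((g ^ m) x) ((g ^ n) x) ≤ lam * |(m : ℝ) - n| + eps)
    (c₀ : ℝ → X) (hc₀ : IsGeodesicRay c₀)
    (h : X → ℝ) (hh : HoroRayCond δ D₁ c₀ h) :
    (h ∘ g ≠ h) ∧
      (¬ BddAbove (Set.range fun n : ℤ => h ((g ^ n) x)) ∨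
        ¬ BddBelow (Set.range fun n : ℤ => h ((g ^ n) x))) := by
  obtain ⟨lam, eps, hlam, -, horbit⟩ := horbit
  have hunbdd : ¬ BddAbove (Set.range fun n : ℤ => h ((g ^ n) x)) := by
    rintro ⟨M, hM⟩
    have hbusemann (n : ℤ) : busemann c₀ ((g ^ n) x) ≤ M - h (c₀ 0) + (2 * D₁ + δ) := by
      have := hh.abs_sub_busemann_le hδ hgeo hhyp hc₀ ((g ^ n) x)
      linarith [(abs_le.1 this).1, hM (mem_range_self n)]
    refine not_forall_le_of_two_mul_le (f := fun n : ℕ ↦ dist ((g ^ (n : ℤ)) x) x)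
      (inv_pos.2 (zero_lt_one.trans_le hlam)) (b := eps)
      (fun n ↦ mod_cast hhyp.dist_zpow_two_mul_le hgeo hc₀ g x hbusemann n) fun n ↦ ?_
    simpa using (horbit n 0).1
  refine ⟨fun hinv ↦ hunbdd ⟨h x, ?_⟩, Or.inl hunbdd⟩
  rintro _ ⟨n, rfl⟩
  exact (IsometryEquiv.apply_zpow_apply_of_comp_eq hinv n x).le

/-- An isometry with quasigeodesic orbit (a loxodromic) preserves no horofunction:
`h ∘ g ≠ h`; in fact `h (gⁿ x)` is unbounded above or below along the orbit. -/
theorem stmt_12 {X : Type*} [MetricSpace X] [ProperSpace X]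
    (δ D₁ : ℝ) (hδ : 0 ≤ δ) (hD₁ : 0 ≤ D₁) (hgeo : GeodesicSpace X) (hhyp : GromovThin X δ)
    (g : X ≃ᵢ X) (x : X)
    (horbit : ∃ lam eps : ℝ, 1 ≤ lam ∧ 0 ≤ eps ∧ ∀ m n : ℤ,
      lam⁻¹ * |(m : ℝ) - n| - eps ≤ dist ((g ^ m) x) ((g ^ n) x) ∧
      dist ((g ^ m) x) ((g ^ n) x) ≤ lam * |(m : ℝ) - n| + eps)
    (c₀ : ℝ → X) (hc₀ : IsGeodesicRay c₀)
    (h : X → ℝ) (hh : HoroRayCond δ D₁ c₀ h) :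
    (h ∘ g ≠ h) ∧
      (¬ BddAbove (Set.range fun n : ℤ => h ((g ^ n) x)) ∨
        ¬ BddBelow (Set.range fun n : ℤ => h ((g ^ n) x))) :=
  stmt_12_general δ D₁ hδ hgeo hhyp g x horbit c₀ hc₀ h hh
end

section
/- Let 𝓗(Υ) be the combinatorial horoball over a connected graph Υ with simplicial metric. For vertices (v,n) and (w,n) at the same level n, the distance in 𝓗(Υ) between them is at most 2·max(0, ⌈log d_Υ(v,w)⌉ − n) + 3, where d_Υ denotes graph distance in Υ. -/
/-- The combinatorial horoball over a graph `G`: vertices `V × ℕ`; a vertical edge joins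
`(v,n)` and `(v,n+1)`; a horizontal edge joins `(v,n)` and `(w,n)` when `d_G(v,w) ≤ eⁿ`. -/
def horoball {V : Type*} (G : SimpleGraph V) : SimpleGraph (V × ℕ) where
  Adj a b :=
    (a.1 = b.1 ∧ (b.2 = a.2 + 1 ∨ a.2 = b.2 + 1)) ∨
    (a.2 = b.2 ∧ a.1 ≠ b.1 ∧ (G.dist a.1 b.1 : ℝ) ≤ Real.exp a.2)
  symm := by
    refine ⟨?_⟩
    rintro ⟨x, m⟩ ⟨y, n⟩ (⟨h1, h2⟩ | ⟨h1, h2, h3⟩)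
    · exact Or.inl ⟨h1.symm, h2.symm⟩
    · refine Or.inr ⟨h1.symm, h2.symm, ?_⟩
      simp only at h1 h3 ⊢
      rw [SimpleGraph.dist_comm, ← h1]
      exact h3
  loopless := by
    refine ⟨?_⟩
    rintro ⟨x, m⟩ (⟨_, h | h⟩ | ⟨_, h, _⟩)
    · omega
    · omega
    · exact h rfl

/-! Climb from level `n` to a level `n + k` with `d_G(v,w) ≤ e^(n+k)`, cross one horizontal
edge there and descend again: a path of length `2k + 1`. The least such `k` is
`max 0 (⌈log d_G(v,w)⌉ - n)`. -/

namespace horoball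

variable {V : Type*} (G : SimpleGraph V)

def descendWalk (v : V) (n : ℕ) : (k : ℕ) → (horoball G).Walk (v, n + k) (v, n)
  | 0 => .nil
  | k + 1 =>
    .cons (show (horoball G).Adj (v, n + (k + 1)) (v, n + k) from Or.inl ⟨rfl, Or.inr rfl⟩)
      (descendWalk v n k)

@[simp]
theorem length_descendWalk (v : V) (n k : ℕ) : (descendWalk G v n k).length = k := by
  induction k with
  | zero => rfl
  | succ k ih => simp [descendWalk, ih]

theorem dist_le_of_dist_le_exp {v w : V} {n k : ℕ}
    (h : (G.dist v w : ℝ) ≤ Real.exp (n + k : ℕ)) :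
    (horoball G).dist (v, n) (w, n) ≤ 2 * k + 1 := by
  by_cases hvw : v = w
  · simp [hvw]
  have hcross : (horoball G).Adj (v, n + k) (w, n + k) := Or.inr ⟨rfl, hvw, h⟩
  have := SimpleGraph.dist_le
    ((descendWalk G v n k).reverse.append (.cons hcross (descendWalk G w n k)))
  simp only [SimpleGraph.Walk.length_append, SimpleGraph.Walk.length_reverse,
    SimpleGraph.Walk.length_cons, length_descendWalk] at this
  omega

end horoball

theorem stmt_14_general {V : Type*} (G : SimpleGraph V) (v w : V) (n : ℕ) :
    ((horoball G).dist (v, n) (w, n) : ℝ) ≤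
      2 * max 0 ((⌈Real.log (G.dist v w)⌉ : ℝ) - n) + 3 := by
  set c := ⌈Real.log (G.dist v w)⌉
  set k := (c - n).toNat
  have hk : (k : ℝ) = max 0 ((c : ℝ) - n) := by
    rw [max_comm]; exact_mod_cast Int.toNat_eq_max (c - n)
  have hexp : (G.dist v w : ℝ) ≤ Real.exp (n + k : ℕ) := by
    have hc : (c : ℝ) ≤ (n + k : ℕ) := by
      have := Int.self_le_toNat (c - n)
      push_cast
      exact_mod_cast (by omega : c ≤ n + k)
    calc (G.dist v w : ℝ) ≤ Real.exp (Real.log (G.dist v w)) := Real.le_exp_log _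
      _ ≤ Real.exp (n + k : ℕ) := Real.exp_le_exp.mpr ((Int.le_ceil _).trans hc)
  have hdist : ((horoball G).dist (v, n) (w, n) : ℝ) ≤ 2 * k + 1 := by
    exact_mod_cast horoball.dist_le_of_dist_le_exp G hexp
  linarith

/-- In the combinatorial horoball over a connected graph, the distance between two
vertices `(v,n)` and `(w,n)` at the same level is at most
`2·max(0, ⌈log d_G(v,w)⌉ − n) + 3`. -/
theorem stmt_14 {V : Type*} (G : SimpleGraph V) (hG : G.Connected) (v w : V) (n : ℕ) :
    ((horoball G).dist (v, n) (w, n) : ℝ) ≤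
      2 * max 0 ((⌈Real.log (G.dist v w)⌉ : ℝ) - n) + 3 :=
  stmt_14_general G v w n
end

section
/- Let Y be a δ-hyperbolic space with bounded parabolic action by a group P, with fellow-traveling constant D from the asynchronous-to-synchronous lemma. If c is a geodesic ray based at y₀, p, p' ∈ P satisfy d(p(y₀), p'(y₀)) ≤ D, and t ≥ D + 5δ, then d(pc(t), p'c(t)) ≤ D. -/
open Metric Set

/-! The ideal triangle formed by `c`, `q c` and a segment `[c 0, q c 0]`, where `q = p⁻¹ p'`, is
`5δ`-thin. Since `d(c 0, q c 0) ≤ D`, at time `t ≥ D + 5δ` the point `c t` is too far from `c 0` to be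
`5δ`-close to an interior point of the segment, so it is `5δ`-close to the ray `q c`; the
asynchronous-to-synchronous constant then gives `d(c t, q c t) ≤ D`, and translating by `p` yields
the claim. -/

section Geodesics

variable {X : Type*} [MetricSpace X]

theorem IsGeodesicRay.comp_isometry {Z : Type*} [MetricSpace Z] {c : ℝ → X} {φ : X → Z}
    (hc : IsGeodesicRay c) (hφ : Isometry φ) : IsGeodesicRay (φ ∘ c) := fun s hs u hu => by
  rw [Function.comp_apply, Function.comp_apply, hφ.dist_eq, hc s hs u hu]

theorem IsGeodesicRay.dist_zero {c : ℝ → X} (hc : IsGeodesicRay c) {t : ℝ} (ht : 0 ≤ t) :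
    dist (c t) (c 0) = t := by
  rw [hc t ht 0 self_mem_Ici, sub_zero, abs_of_nonneg ht]

theorem IsGeodesicSeg.dist_left_s17 {f : ℝ → X} {x y : X} (hf : IsGeodesicSeg f x y) {s : ℝ}
    (hs : s ∈ Icc 0 (dist x y)) : dist x (f s) = s := by
  rw [← hf.1, hf.2.2 0 ⟨le_rfl, dist_nonneg⟩ s hs, zero_sub, abs_neg, abs_of_nonneg hs.1]

theorem IsGeodesicRay.dist_le_of_dist_seg_le {c f : ℝ → X} {y : X} {r s t : ℝ}
    (hc : IsGeodesicRay c) (hf : IsGeodesicSeg f (c 0) y) (hs : s ∈ Icc 0 (dist (c 0) y))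
    (hr : dist (c t) (f s) ≤ r) (ht : dist (c 0) y + r ≤ t) : dist (c t) y ≤ r := by
  have ht0 : 0 ≤ t := by linarith [dist_nonneg (x := c 0) (y := y), dist_nonneg.trans hr]
  have hts : t ≤ r + s := calc
    t = dist (c t) (c 0) := (hc.dist_zero ht0).symm
    _ ≤ dist (c t) (f s) + dist (f s) (c 0) := dist_triangle _ _ _
    _ = dist (c t) (f s) + s := by rw [dist_comm (f s), hf.dist_left_s17 hs]
    _ ≤ r + s := by linarith
  have hsy : s = dist (c 0) y := le_antisymm hs.2 (by linarith)
  rwa [hsy, hf.2.1] at hr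

end Geodesics

theorem dist_smul_smul_eq_dist_inv_mul_smul {Y P : Type*} [MetricSpace Y] [Group P]
    [MulAction P Y] (hiso : ∀ (p : P) (a b : Y), dist (p • a) (p • b) = dist a b)
    (p p' : P) (a : Y) : dist (p • a) (p' • a) = dist a ((p⁻¹ * p') • a) := by
  rw [← hiso p⁻¹, inv_smul_smul, mul_smul]

theorem stmt_17_general {Y P : Type*} [MetricSpace Y] [Group P] [MulAction P Y]
    (δ D : ℝ) (hδ : 0 ≤ δ)
    (hgeo : GeodesicSpace Y)
    (hiso : ∀ (p : P) (a b : Y), dist (p • a) (p • b) = dist a b)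
    -- ideal triangles (two asymptotic rays and the segment joining their basepoints)
    -- are 5δ-thin:
    (hThin : ∀ (c₁ c₂ f : ℝ → Y), IsGeodesicRay c₁ → IsGeodesicRay c₂ →
      IsGeodesicSeg f (c₁ 0) (c₂ 0) → ∀ t, 0 ≤ t →
        (∃ s, 0 ≤ s ∧ dist (c₁ t) (c₂ s) ≤ 5 * δ) ∨
        (∃ s ∈ Set.Icc (0:ℝ) (dist (c₁ 0) (c₂ 0)), dist (c₁ t) (f s) ≤ 5 * δ))
    -- `D` is the asynchronous-to-synchronous fellow-traveling constant:
    (hDft : ∀ c' : ℝ → Y, IsGeodesicRay c' → ∀ (p : P) (t : ℝ), 0 ≤ t →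
      (∃ s, 0 ≤ s ∧ dist (c' t) (p • c' s) ≤ 5 * δ) → dist (c' t) (p • c' t) ≤ D)
    (c : ℝ → Y) (hc : IsGeodesicRay c) (y₀ : Y) (hc0 : c 0 = y₀)
    (p p' : P) (hpp : dist (p • y₀) (p' • y₀) ≤ D)
    (t : ℝ) (ht : D + 5 * δ ≤ t) :
    dist (p • c t) (p' • c t) ≤ D := by
  have ht0 : 0 ≤ t := by linarith [dist_nonneg.trans hpp]
  set q := p⁻¹ * p'
  have hqc : IsGeodesicRay (fun s => q • c s) :=
    hc.comp_isometry (Isometry.of_dist_eq (hiso q))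
  have hbase : dist (c 0) (q • c 0) ≤ D := by
    rwa [← dist_smul_smul_eq_dist_inv_mul_smul hiso, hc0]
  obtain ⟨f, hf⟩ := hgeo (c 0) (q • c 0)
  have hnear : ∃ s, 0 ≤ s ∧ dist (c t) (q • c s) ≤ 5 * δ := by
    rcases hThin c _ f hc hqc hf t ht0 with hray | ⟨s, hs, hseg⟩
    · exact hray
    · exact ⟨0, le_rfl, hc.dist_le_of_dist_seg_le hf hs hseg (by linarith)⟩
  rw [dist_smul_smul_eq_dist_inv_mul_smul hiso]
  exact hDft c hc q t ht0 hnear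

/-- If `d(p y₀, p' y₀) ≤ D` and `t ≥ D + 5δ`, then the rays `p c` and `p' c`
synchronously `D`-fellow-travel at time `t`. -/
theorem stmt_17 {Y P : Type*} [MetricSpace Y] [ProperSpace Y] [Group P] [MulAction P Y]
    (δ D : ℝ) (hδ : 0 ≤ δ)
    (hgeo : GeodesicSpace Y)
    (hiso : ∀ (p : P) (a b : Y), dist (p • a) (p • b) = dist a b)
    -- the Gromov boundary of `Y` is a single point: all rays are asymptotic
    (hone : ∀ c₁ c₂ : ℝ → Y, IsGeodesicRay c₁ → IsGeodesicRay c₂ → AsympRays c₁ c₂)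
    -- ideal triangles (two asymptotic rays and the segment joining their basepoints)
    -- are 5δ-thin:
    (hThin : ∀ (c₁ c₂ f : ℝ → Y), IsGeodesicRay c₁ → IsGeodesicRay c₂ →
      IsGeodesicSeg f (c₁ 0) (c₂ 0) → ∀ t, 0 ≤ t →
        (∃ s, 0 ≤ s ∧ dist (c₁ t) (c₂ s) ≤ 5 * δ) ∨
        (∃ s ∈ Set.Icc (0:ℝ) (dist (c₁ 0) (c₂ 0)), dist (c₁ t) (f s) ≤ 5 * δ))
    -- `D` is the asynchronous-to-synchronous fellow-traveling constant:
    (hDft : ∀ c' : ℝ → Y, IsGeodesicRay c' → ∀ (p : P) (t : ℝ), 0 ≤ t →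
      (∃ s, 0 ≤ s ∧ dist (c' t) (p • c' s) ≤ 5 * δ) → dist (c' t) (p • c' t) ≤ D)
    (c : ℝ → Y) (hc : IsGeodesicRay c) (y₀ : Y) (hc0 : c 0 = y₀)
    (p p' : P) (hpp : dist (p • y₀) (p' • y₀) ≤ D)
    (t : ℝ) (ht : D + 5 * δ ≤ t) :
    dist (p • c t) (p' • c t) ≤ D :=
  stmt_17_general δ D hδ hgeo hiso hThin hDft c hc y₀ hc0 p p' hpp t ht
end
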